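/- Let J be Hilbert–Schmidt with singular system (σᵢ, uᵢ, vᵢ) with ∑ᵢ √σᵢ < ∞, and define B by Bξ = ∑ᵢ λᵢ uᵢ⟨uᵢ, ξ⟩ where λᵢ = σ_w² for i ≤ q and λᵢ = √σᵢ for i > q (σ_w > 0, q a positive integer). Then B is trace class, R(J) ⊆ R(B), and ∑ᵢ σᵢ²/λᵢ² = ∑_{i≤q} σᵢ²/σ_w⁴ + ∑_{i>q} σᵢ < ∞. -/
import Mathlib


open scoped InnerProductSpace

/-- If two real sequences agree from index `q` on and one is summable, so is the other. -/
lemma stmt7_aux_summable {q : ℕ} {f g : ℕ → ℝ} (h : ∀ i, q ≤ i → f i = g i)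
    (hg : Summable g) : Summable f := by
  rw [← summable_nat_add_iff q]
  have : (fun n => f (n + q)) = fun n => g (n + q) := by
    funext n; exact h _ (Nat.le_add_left q n)
  rw [this]
  exact (summable_nat_add_iff q).mpr hg

/-- Explicit example verifying the sufficient condition of Proposition 1:
`J` Hilbert–Schmidt with singular system `(σᵢ, uᵢ, vᵢ)`, `∑ᵢ √σᵢ < ∞`, and
`B` diagonal in the basis `(uᵢ)` with eigenvalues `λᵢ = σ_w²` for `i < q`,
`λᵢ = √σᵢ` for `i ≥ q`.  Then `B` is trace class, `R(J) ⊆ R(B)`, and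
`∑ᵢ σᵢ²/λᵢ² = ∑_{i<q} σᵢ²/σ_w⁴ + ∑_{i≥q} σᵢ < ∞`. -/
theorem stmt7
    {Θ H : Type*}
    [NormedAddCommGroup Θ] [InnerProductSpace ℂ Θ] [CompleteSpace Θ]
    [NormedAddCommGroup H] [InnerProductSpace ℂ H] [CompleteSpace H]
    (J : Θ →L[ℂ] H) (B : H →L[ℂ] H)
    (u : ℕ → H) (v : ℕ → Θ) (σ : ℕ → ℝ) (σw : ℝ) (q : ℕ)
    (hu : Orthonormal ℂ u) (hv : Orthonormal ℂ v)
    (hσ : ∀ i, 0 < σ i) (hanti : Antitone σ)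
    (hσw : 0 < σw) (hq : 0 < q)
    (hsum : Summable fun i => Real.sqrt (σ i))
    (hJ : ∀ θ : Θ, J θ = ∑' i, (⟪v i, θ⟫_ℂ * (σ i : ℂ)) • u i)
    (lam : ℕ → ℝ)
    (hlam : ∀ i, lam i = if i < q then σw ^ 2 else Real.sqrt (σ i))
    (hB : ∀ ξ : H, B ξ = ∑' i, ((lam i : ℂ) * ⟪u i, ξ⟫_ℂ) • u i) :
    Summable lam ∧
    Set.range ⇑J ⊆ Set.range ⇑B ∧
    (Summable fun i => (σ i) ^ 2 / (lam i) ^ 2) ∧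
    ∑' i, (σ i) ^ 2 / (lam i) ^ 2
      = (∑ i ∈ Finset.range q, (σ i) ^ 2 / σw ^ 4)
        + ∑' i, (if q ≤ i then σ i else 0) := by
  have hlam_pos : ∀ i, 0 < lam i := by
    intro i; rw [hlam i]; split
    · positivity
    · exact Real.sqrt_pos.mpr (hσ i)
  -- summability of σ
  have hσsum : Summable σ := by
    have h0 : ∀ i, σ i ≤ Real.sqrt (σ 0) * Real.sqrt (σ i) := by
      intro i
      calc σ i = Real.sqrt (σ i) * Real.sqrt (σ i) := (Real.mul_self_sqrt (hσ i).le).symm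
        _ ≤ Real.sqrt (σ 0) * Real.sqrt (σ i) := mul_le_mul_of_nonneg_right
            (Real.sqrt_le_sqrt (hanti (Nat.zero_le i))) (Real.sqrt_nonneg _)
    exact (hsum.mul_left _).of_nonneg_of_le (fun i => (hσ i).le) h0
  -- summability of lam
  have hlamsum : Summable lam :=
    stmt7_aux_summable (g := fun i => Real.sqrt (σ i))
      (fun i hi => by rw [hlam i, if_neg (not_lt.mpr hi)]) hsum
  -- summability of σ/lam
  have hratio : Summable fun i => σ i / lam i := by
    refine stmt7_aux_summable (q := q) (g := fun i => Real.sqrt (σ i)) (fun i hi => ?_) hsum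
    rw [hlam i, if_neg (not_lt.mpr hi)]
    rw [Real.div_sqrt]
  -- summability of σ²/lam²
  have hsq : Summable fun i => (σ i) ^ 2 / (lam i) ^ 2 := by
    refine stmt7_aux_summable (q := q) (g := σ) (fun i hi => ?_) hσsum
    rw [hlam i, if_neg (not_lt.mpr hi), Real.sq_sqrt (hσ i).le, sq,
      mul_div_assoc, div_self (hσ i).ne', mul_one]
  refine ⟨hlamsum, ?_, hsq, ?_⟩
  · -- range inclusion
    rintro _ ⟨θ, rfl⟩
    set c : ℕ → ℂ := fun i => ⟪v i, θ⟫_ℂ * ((σ i / lam i : ℝ) : ℂ) with hc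
    have hnorm : Summable fun i => ‖c i • u i‖ := by
      refine (hratio.mul_left ‖θ‖).of_nonneg_of_le (fun i => norm_nonneg _) fun i => ?_
      rw [norm_smul, hu.1 i, mul_one, hc, norm_mul, Complex.norm_real,
        Real.norm_eq_abs, abs_of_nonneg (div_nonneg (hσ i).le (hlam_pos i).le)]
      refine mul_le_mul_of_nonneg_right ?_ (div_nonneg (hσ i).le (hlam_pos i).le)
      calc ‖⟪v i, θ⟫_ℂ‖ ≤ ‖v i‖ * ‖θ‖ := norm_inner_le_norm _ _
        _ = ‖θ‖ := by rw [hv.1 i, one_mul]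
    have hS : HasSum (fun i => c i • u i) (∑' i, c i • u i) :=
      (Summable.of_norm hnorm).hasSum
    refine ⟨∑' i, c i • u i, ?_⟩
    rw [hB, hJ]
    refine tsum_congr fun i => ?_
    have hinner : ⟪u i, ∑' j, c j • u j⟫_ℂ = c i := by
      have h1 : HasSum (fun j => ⟪u i, c j • u j⟫_ℂ) ⟪u i, ∑' j, c j • u j⟫_ℂ :=
        (innerSL ℂ (u i)).hasSum hS
      have h2 : (fun j => ⟪u i, c j • u j⟫_ℂ) = fun j => if j = i then c i else 0 := by
        funext j
        rw [inner_smul_right, orthonormal_iff_ite.mp hu i j]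
        by_cases h : j = i
        · simp [h]
        · simp [h, Ne.symm h]
      rw [h2] at h1
      exact h1.unique (hasSum_ite_eq i (c i))
    rw [hinner, hc]
    have : (lam i : ℂ) * (⟪v i, θ⟫_ℂ * ((σ i / lam i : ℝ) : ℂ)) =
        ⟪v i, θ⟫_ℂ * ((lam i : ℂ) * ((σ i / lam i : ℝ) : ℂ)) := by ring
    rw [this]
    congr 1
    have hne : (lam i : ℂ) ≠ 0 := Complex.ofReal_ne_zero.mpr (hlam_pos i).ne'
    push_cast
    field_simp
  · -- tsum formula
    have hdecomp : ∀ i, (σ i) ^ 2 / (lam i) ^ 2 =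
        (if i < q then (σ i) ^ 2 / σw ^ 4 else 0) +
        (if q ≤ i then σ i else 0) := by
      intro i
      by_cases h : i < q
      · rw [if_pos h, if_neg (not_le.mpr h), add_zero, hlam i, if_pos h]
        ring_nf
      · rw [if_neg h, if_pos (not_lt.mp h), zero_add, hlam i,
          if_neg h, Real.sq_sqrt (hσ i).le, sq, mul_div_assoc,
          div_self (hσ i).ne', mul_one]
    have h1 : Summable fun i => if i < q then (σ i) ^ 2 / σw ^ 4 else 0 :=
      summable_of_ne_finset_zero (s := Finset.range q)
        (fun i hi => if_neg (by simpa using hi))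
    have h2 : Summable fun i => if q ≤ i then σ i else 0 := by
      refine hσsum.of_nonneg_of_le (fun i => ?_) (fun i => ?_)
      · split <;> [exact (hσ i).le; rfl]
      · split <;> [rfl; exact (hσ i).le]
    rw [tsum_congr hdecomp, Summable.tsum_add h1 h2]
    congr 1
    rw [tsum_eq_sum (s := Finset.range q) (fun i hi => if_neg (by simpa using hi))]
    exact Finset.sum_congr rfl fun i hi => if_pos (Finset.mem_range.mp hi)
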